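/- arXiv:1508.06339 — 2 statements merged into one kernel-verified Lean document; each statement's English description precedes it below -/
import Mathlib

section
/- With notation as in the collateralized FX forward setting, suppose the collateral currency differs across the legs: for currencies (i),(j),(l) and possibly distinct collateral currencies, the triangle relation f_x^{(i,j)}(t;T,(k₁)) · f_x^{(j,l)}(t;T,(k₂)) = f_x^{(i,l)}(t;T,(k₃)) holds for all positive values of the collateralized bond prices if and only if the ratios Ỹ^{(j,k₁)}/Ỹ^{(j,k₂)} and Ỹ^{(i,k₁)}/Ỹ^{(i,k₃)} and Ỹ^{(l,k₂)}/Ỹ^{(l,k₃)} combine to 1; in particular, when k₁ = k₂ = k₃ the relation always holds, and there exist positive bond prices for which it fails when the collateral currencies differ. -/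
/-- The currency triangle relation for forward FX rates with possibly
different collateral currencies holds iff the bond-price ratios combine to 1;
it always holds for a common collateral currency, and can fail otherwise. -/
theorem fx_forward_triangle_collateral_dependence
    {ι κ : Type*} (i j l : ι) (k₁ k₂ k₃ : κ)
    (fx : ι → ι → ℝ) (hfx_pos : ∀ a b, 0 < fx a b)
    (hfx_tri : ∀ a b c, fx a b * fx b c = fx a c)
    (Y : ι → κ → ℝ) (hY_pos : ∀ a k, 0 < Y a k)
    (F : ι → ι → κ → ℝ) (hF : ∀ a b k, F a b k = fx a b * Y b k / Y a k) :
    -- (a) the general triangle relation holds iff the bond-price ratios combine to 1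
    (F i j k₁ * F j l k₂ = F i l k₃
      ↔ (Y j k₁ / Y j k₂) * (Y i k₃ / Y i k₁) * (Y l k₂ / Y l k₃) = 1)
    -- (b) with a common collateral currency the relation always holds
    ∧ (k₁ = k₂ → k₂ = k₃ → F i j k₁ * F j l k₂ = F i l k₃)
    -- (c) with differing collateral currencies the relation can fail
    ∧ (∃ (fx' : Fin 3 → Fin 3 → ℝ) (Y' : Fin 3 → Fin 2 → ℝ)
        (F' : Fin 3 → Fin 3 → Fin 2 → ℝ) (k₁' k₂' k₃' : Fin 2),
        (∀ a b, 0 < fx' a b) ∧ (∀ a b c, fx' a b * fx' b c = fx' a c)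
        ∧ (∀ a k, 0 < Y' a k)
        ∧ (∀ a b k, F' a b k = fx' a b * Y' b k / Y' a k)
        ∧ ¬ (k₁' = k₂' ∧ k₂' = k₃')
        ∧ F' 0 1 k₁' * F' 1 2 k₂' ≠ F' 0 2 k₃') := by
  have hFpos : 0 < F i l k₃ := by
    rw [hF]
    have := hfx_pos i l
    have := hY_pos l k₃
    have := hY_pos i k₃
    positivity
  have key : F i j k₁ * F j l k₂ =
      F i l k₃ * ((Y j k₁ / Y j k₂) * (Y i k₃ / Y i k₁) * (Y l k₂ / Y l k₃)) := by
    rw [hF, hF, hF, ← hfx_tri i j l]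
    have h1 := (hY_pos i k₁).ne'
    have h2 := (hY_pos j k₂).ne'
    have h3 := (hY_pos i k₃).ne'
    have h4 := (hY_pos l k₃).ne'
    field_simp
  have ha : (F i j k₁ * F j l k₂ = F i l k₃
      ↔ (Y j k₁ / Y j k₂) * (Y i k₃ / Y i k₁) * (Y l k₂ / Y l k₃) = 1) := by
    rw [key]
    constructor
    · intro h
      have := mul_right_eq_self₀.mp h
      rcases this with h' | h'
      · exact h'
      · exact absurd h' hFpos.ne'
    · intro h
      rw [h, mul_one]
  refine ⟨ha, ?_, ?_⟩
  · rintro rfl rfl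
    rw [ha]
    have h1 := (hY_pos i k₁).ne'
    have h2 := (hY_pos j k₁).ne'
    have h3 := (hY_pos l k₁).ne'
    field_simp
  · refine ⟨fun _ _ => 1, fun a k => if a = 1 ∧ k = 0 then 2 else 1,
      fun a b k => 1 * (if b = 1 ∧ k = 0 then (2:ℝ) else 1) / (if a = 1 ∧ k = 0 then 2 else 1),
      0, 1, 1, fun a b => one_pos, fun a b c => by ring, ?_, fun a b k => rfl, ?_, ?_⟩
    · intro a k
      dsimp only
      split <;> norm_num
    · simp
    · norm_num
end

section
/- Let the spot FX rate satisfy df_x(t)/f_x(t) = (c^{(i)}(t) − c^{(j)}(t) + y^{(i,j)}(t)) dt + ⟪σ_X(t), dW_t⟫ under ℚ_B^{(i)}, and within a tenor interval (T_{n}, T_{n+1}] define the rolling forward rate f_x(t, T_{q(t)};(k)) = f_x(t) · Ỹ^{(j,k)}(t,T_{q(t)}) / Ỹ^{(i,k)}(t,T_{q(t)}), where Ỹ^{(i,k)}(t,T_{q(t)}) = exp(−∫_t^{T_{q(t)}}(c^{(i)}(s)+y^{(i,k)}(s))ds) and Ỹ^{(j,k)}(t,T_{q(t)}) = exp(−∫_t^{T_{q(t)}}(c^{(j)}(s)+y^{(j,k)}(s))ds)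 with all short-rate processes ℱ_{T_{q(t)−1}}-measurable (hence of finite variation and adapted within the interval). Then within each tenor interval the rolling forward rate is driftless: d f_x(t,T_{q(t)};(k)) = f_x(t,T_{q(t)};(k)) ⟪σ_X(t), dW_t⟫, using the identity y^{(i,j)} = y^{(i,k)} − y^{(j,k)}. -/
open MeasureTheory intervalIntegral

/-- Within a tenor interval, the rolling forward FX rate
`f_x(t,T_{q(t)};(k)) = f_x(t)·Ỹ^{(j,k)}(t,T_{q(t)})/Ỹ^{(i,k)}(t,T_{q(t)})` is
driftless: it is the stochastic exponential of the spot-FX martingale part, i.e.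
`F(t) = F(s)·exp(M(t)-M(s) - ½∫_s^t ‖σ_X‖²)`, where `M` is the martingale part
`∫ ⟪σ_X, dW⟫` of the spot FX rate. This uses the identity `y^{(i,j)} = y^{(i,k)} - y^{(j,k)}`. -/
theorem rolling_fx_forward_driftless
    {Ω : Type*} (d : ℕ)
    -- the current tenor interval (T_lo, T_hi] with right endpoint T_hi = T_{q(t)}
    (Tlo Thi : ℝ) (hT : Tlo < Thi)
    -- short rates and funding spreads (paths)
    (ci cj yik yjk yij : ℝ → Ω → ℝ)
    (hyij : ∀ s ω, yij s ω = yik s ω - yjk s ω)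
    (hint : ∀ ω, ∀ a b, a ∈ Set.Icc Tlo Thi → b ∈ Set.Icc Tlo Thi →
      IntervalIntegrable (fun s => ci s ω) volume a b
      ∧ IntervalIntegrable (fun s => cj s ω) volume a b
      ∧ IntervalIntegrable (fun s => yik s ω) volume a b
      ∧ IntervalIntegrable (fun s => yjk s ω) volume a b)
    -- spot FX volatility and the martingale part M(t) = ∫_0^t ⟪σ_X, dW⟫
    (σX : ℝ → EuclideanSpace ℝ (Fin d)) (hσX : Continuous σX)
    (M : ℝ → Ω → ℝ)
    -- spot FX dynamics df_x/f_x = (c^{(i)} - c^{(j)} + y^{(i,j)}) dt + ⟪σ_X, dW⟫,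
    -- in stochastic-exponential form
    (fx : ℝ → Ω → ℝ) (hfx_pos : ∀ t ω, 0 < fx t ω)
    (hfx : ∀ ω, ∀ s t, s ∈ Set.Icc Tlo Thi → t ∈ Set.Icc Tlo Thi → s ≤ t →
      fx t ω = fx s ω * Real.exp
        ((∫ u in s..t, (ci u ω - cj u ω + yij u ω - (1/2) * ‖σX u‖ ^ 2))
          + (M t ω - M s ω)))
    -- the foreign-collateralized discount bonds over the interval
    (Yik Yjk : ℝ → Ω → ℝ)
    (hYik : ∀ t ω, Yik t ω = Real.exp (-∫ s in t..Thi, (ci s ω + yik s ω)))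
    (hYjk : ∀ t ω, Yjk t ω = Real.exp (-∫ s in t..Thi, (cj s ω + yjk s ω)))
    -- the rolling forward FX rate
    (F : ℝ → Ω → ℝ)
    (hF : ∀ t ω, F t ω = fx t ω * Yjk t ω / Yik t ω) :
    ∀ ω, ∀ s t, s ∈ Set.Icc Tlo Thi → t ∈ Set.Icc Tlo Thi → s ≤ t →
      F t ω = F s ω
        * Real.exp (M t ω - M s ω - (1/2) * ∫ u in s..t, ‖σX u‖ ^ 2) := by
  intro ω s t hs ht hst
  have hThi : Thi ∈ Set.Icc Tlo Thi := ⟨hT.le, le_refl _⟩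
  obtain ⟨h1, h2, h3, h4⟩ := hint ω s t hs ht
  obtain ⟨g1, g2, g3, g4⟩ := hint ω t Thi ht hThi
  have hσ2 : ∀ a b : ℝ, IntervalIntegrable (fun u => (1/2 : ℝ) * ‖σX u‖ ^ 2) volume a b := by
    intro a b
    exact (((hσX.norm.pow 2).const_smul ((1:ℝ)/2)).intervalIntegrable a b)
  have e1 : (∫ u in t..Thi, (ci u ω + yik u ω))
      = (∫ u in s..Thi, (ci u ω + yik u ω)) - ∫ u in s..t, (ci u ω + yik u ω) := by
    rw [← integral_add_adjacent_intervals (h1.add h3) (g1.add g3)]; ring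
  have e2 : (∫ u in t..Thi, (cj u ω + yjk u ω))
      = (∫ u in s..Thi, (cj u ω + yjk u ω)) - ∫ u in s..t, (cj u ω + yjk u ω) := by
    rw [← integral_add_adjacent_intervals (h2.add h4) (g2.add g4)]; ring
  have e3 : (∫ u in s..t, (ci u ω - cj u ω + yij u ω - (1/2) * ‖σX u‖ ^ 2))
      = (∫ u in s..t, (ci u ω + yik u ω)) - (∫ u in s..t, (cj u ω + yjk u ω))
        - (1/2) * ∫ u in s..t, ‖σX u‖ ^ 2 := by
    have step : (∫ u in s..t, (ci u ω - cj u ω + yij u ω - (1/2) * ‖σX u‖ ^ 2))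
        = ∫ u in s..t, ((ci u ω + yik u ω) - (cj u ω + yjk u ω) - (1/2) * ‖σX u‖ ^ 2) := by
      apply intervalIntegral.integral_congr
      intro u _
      simp only [hyij]; ring
    rw [step, intervalIntegral.integral_sub ((h1.add h3).sub (h2.add h4)) (hσ2 s t),
      intervalIntegral.integral_sub (h1.add h3) (h2.add h4),
      intervalIntegral.integral_const_mul]
  rw [hF t ω, hF s ω, hfx ω s t hs ht hst, hYik, hYjk, hYik, hYjk, e1, e2, e3,
    mul_assoc, ← Real.exp_add, mul_div_assoc, ← Real.exp_sub,
    mul_div_assoc, ← Real.exp_sub, mul_assoc, ← Real.exp_add]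
  congr 1
  ring_nf
end
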